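/- arXiv:1204.5547 — 3 statements merged into one kernel-verified Lean document; each statement's English description precedes it below -/
import Mathlib

section
/- If f : C → C' is a linear isometric isomorphism (bijective linear map preserving Hamming weight) between two nondegenerate q-ary linear codes of the same length n, then f is the restriction to C of a linear transformation of F_q^n given by a monomial matrix (a product of a permutation matrix and an invertible diagonal matrix). -/
/-!
Compare the coordinate functionals `u i : c ↦ c i` of `C` with the functionals `u' i : c ↦ (f c) i`.
Both families consist of nonzero functionals, and weight preservation says that every `c` is
killed by equally many members of each. For a hyperplane `K` of `C`, double counting the pairs
`(v, i)` with `v ∈ K` and `u i v = 0` gives `|K| (n + (q - 1) N_K) / q`, where `N_K` is the number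
of `i` with `ker (u i) = K`: a hyperplane meets `K` in `|K|` points if it equals `K` and in
`|K| / q` points otherwise. Hence both families have the same kernels with the same
multiplicities, so they match up under a permutation of the coordinates, and functionals with the
same kernel differ by a nonzero scalar.
-/

open LinearMap

theorem Nat.card_subtype_prod_eq_of_forall_card_eq {α β : Type*} [Finite β] {p q : α → β → Prop}
    (h : ∀ a, Nat.card {b // p a b} = Nat.card {b // q a b}) :
    Nat.card {c : α × β // p c.1 c.2} = Nat.card {c : α × β // q c.1 c.2} :=
  Nat.card_congr <| (Equiv.subtypeProdEquivSigmaSubtype p).trans <|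
    (Equiv.sigmaCongrRight fun a => (Finite.card_eq.mp (h a)).some).trans
      (Equiv.subtypeProdEquivSigmaSubtype q).symm

theorem card_zeros_add_hammingNorm {ι R : Type*} [Fintype ι] [Zero R] [DecidableEq R]
    (x : ι → R) : Nat.card {i // x i = 0} + hammingNorm x = Fintype.card ι := by
  rw [hammingNorm, ← Fintype.card_subtype, Nat.card_eq_fintype_card, Fintype.card_subtype_compl,
    Nat.add_sub_cancel' (Fintype.card_subtype_le _)]

section Hyperplane

variable {F V : Type*} [Field F] [AddCommGroup V] [Module F V]

theorem LinearMap.exists_eq_smul_of_ker_le {φ ψ : V →ₗ[F] F} (h : ker φ ≤ ker ψ) :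
    ∃ a : F, ψ = a • φ := by
  have hψ : ψ ∈ Submodule.span F (Set.range fun _ : Unit => φ) :=
    mem_span_of_iInf_ker_le_ker (by simpa using h)
  rw [Set.range_const, Submodule.mem_span_singleton] at hψ
  obtain ⟨a, rfl⟩ := hψ
  exact ⟨a, rfl⟩

theorem LinearMap.ker_eq_of_ker_le {φ ψ : V →ₗ[F] F} (hψ : ψ ≠ 0) (h : ker φ ≤ ker ψ) :
    ker ψ = ker φ := by
  obtain ⟨a, rfl⟩ := exists_eq_smul_of_ker_le h
  exact ker_smul φ a (by rintro rfl; simp at hψ)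

theorem LinearMap.card_ker_mul_card {φ : V →ₗ[F] F} (hφ : φ ≠ 0) :
    Nat.card (ker φ) * Nat.card F = Nat.card V := by
  rw [Submodule.card_eq_card_quotient_mul_card (ker φ),
    Nat.card_congr (φ.quotKerEquivOfSurjective (surjective_of_ne_zero hφ)).toEquiv]

open Classical in
theorem LinearMap.card_zeros_on_ker_mul_card (φ : V →ₗ[F] F) {ψ : V →ₗ[F] F} (hψ : ψ ≠ 0) :
    Nat.card {v : ker φ // ψ v = 0} * Nat.card F =
      if ker ψ = ker φ then Nat.card (ker φ) * Nat.card F else Nat.card (ker φ) := by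
  have hcard : Nat.card {v : ker φ // ψ v = 0} = Nat.card (ker (ψ ∘ₗ (ker φ).subtype)) := rfl
  split_ifs with h
  · have hzero : ψ ∘ₗ (ker φ).subtype = 0 := by
      ext ⟨v, hv⟩
      simpa [← h] using hv
    rw [hcard, hzero, ker_zero, Nat.card_congr (Submodule.topEquiv (R := F) (M := ker φ)).toEquiv]
  · rw [hcard]
    refine card_ker_mul_card fun h0 => h (ker_eq_of_ker_le hψ fun v hv => ?_)
    simpa using congr($h0 ⟨v, hv⟩)

end Hyperplane

section Counting

variable {F V ι : Type*} [Field F] [Finite F] [AddCommGroup V] [Module F V] [Finite V] [Fintype ι]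

theorem card_zero_pairs_on_ker_mul_card (u : ι → V →ₗ[F] F) (hu : ∀ i, u i ≠ 0)
    (φ : V →ₗ[F] F) :
    Nat.card {p : ker φ × ι // u p.2 p.1 = 0} * Nat.card F =
      Nat.card (ker φ) *
        (Fintype.card ι + (Nat.card F - 1) * Nat.card {i // ker (u i) = ker φ}) := by
  classical
  have hswap : Nat.card {p : ker φ × ι // u p.2 p.1 = 0} =
      ∑ i, Nat.card {v : ker φ // u i v = 0} := by
    rw [← Nat.card_sigma]
    exact Nat.card_congr (((Equiv.prodComm _ _).subtypeEquiv fun _ => Iff.rfl).trans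
      (Equiv.subtypeProdEquivSigmaSubtype fun i (v : ker φ) => u i v = 0))
  obtain ⟨r, hr⟩ : ∃ r, Nat.card F = r + 1 := Nat.exists_eq_add_one.mpr Nat.card_pos
  rw [hswap, Finset.sum_mul, Finset.sum_congr rfl fun i _ => card_zeros_on_ker_mul_card φ (hu i),
    Finset.sum_ite, Finset.sum_const, Finset.sum_const,
    Nat.card_eq_fintype_card (α := {i // ker (u i) = ker φ}), Fintype.card_subtype,
    ← Finset.card_univ,
    ← Finset.card_filter_add_card_filter_not (s := .univ) (fun i => ker (u i) = ker φ), hr]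
  simp only [smul_eq_mul, Nat.add_sub_cancel]
  ring

theorem card_ker_eq_eq_of_card_zeros_eq {u u' : ι → V →ₗ[F] F} (hu : ∀ i, u i ≠ 0)
    (hu' : ∀ i, u' i ≠ 0) (h : ∀ v, Nat.card {i // u i v = 0} = Nat.card {i // u' i v = 0})
    (φ : V →ₗ[F] F) :
    Nat.card {i // ker (u i) = ker φ} = Nat.card {i // ker (u' i) = ker φ} := by
  have hpairs : Nat.card {p : ker φ × ι // u p.2 p.1 = 0} =
      Nat.card {p : ker φ × ι // u' p.2 p.1 = 0} :=
    Nat.card_subtype_prod_eq_of_forall_card_eq (p := fun (v : ker φ) i => u i v = 0) fun v => h v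
  have hq : 0 < Nat.card F - 1 := Nat.sub_pos_of_lt Finite.one_lt_card
  have hcount := card_zero_pairs_on_ker_mul_card u hu φ
  rw [hpairs, card_zero_pairs_on_ker_mul_card u' hu' φ] at hcount
  exact (Nat.eq_of_mul_eq_mul_left hq (Nat.add_left_cancel
    (Nat.eq_of_mul_eq_mul_left Nat.card_pos hcount))).symm

theorem exists_perm_ker_eq_of_card_zeros_eq {u u' : ι → V →ₗ[F] F} (hu : ∀ i, u i ≠ 0)
    (hu' : ∀ i, u' i ≠ 0) (h : ∀ v, Nat.card {i // u i v = 0} = Nat.card {i // u' i v = 0}) :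
    ∃ σ : Equiv.Perm ι, ∀ i, ker (u (σ i)) = ker (u' i) := by
  have hfiber (K : Submodule F V) :
      Nat.card {i // ker (u' i) = K} = Nat.card {i // ker (u i) = K} := by
    by_cases hK : ∃ j, ker (u j) = K
    · obtain ⟨j, rfl⟩ := hK
      exact (card_ker_eq_eq_of_card_zeros_eq hu hu' h (u j)).symm
    by_cases hK' : ∃ j, ker (u' j) = K
    · obtain ⟨j, rfl⟩ := hK'
      exact (card_ker_eq_eq_of_card_zeros_eq hu hu' h (u' j)).symm
    push Not at hK hK'
    simp [hK, hK']
  have e (K : Submodule F V) : {i // ker (u' i) = K} ≃ {i // ker (u i) = K} :=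
    (Finite.card_eq.mp (hfiber K)).some
  exact ⟨Equiv.ofFiberEquiv e, Equiv.ofFiberEquiv_map e⟩

theorem exists_perm_units_smul_of_card_zeros_eq {u u' : ι → V →ₗ[F] F} (hu : ∀ i, u i ≠ 0)
    (hu' : ∀ i, u' i ≠ 0) (h : ∀ v, Nat.card {i // u i v = 0} = Nat.card {i // u' i v = 0}) :
    ∃ (σ : Equiv.Perm ι) (a : ι → Fˣ), ∀ i, u' i = a i • u (σ i) := by
  obtain ⟨σ, hσ⟩ := exists_perm_ker_eq_of_card_zeros_eq hu hu' h
  choose a ha using fun i => exists_eq_smul_of_ker_le (hσ i).le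
  have ha0 (i : ι) : a i ≠ 0 := by
    intro h0
    exact hu' i (by simp [ha i, h0])
  exact ⟨σ, fun i => Units.mk0 (a i) (ha0 i), fun i => ha i⟩

end Counting

/-- If `f : C → C'` is a linear isometric isomorphism (a bijective
linear map preserving Hamming weight) between two nondegenerate `q`-ary linear codes of
length `n`, then `f` is the restriction to `C` of a linear transformation of `F^n`
given by a monomial matrix: there are a permutation `σ` of the coordinates and nonzero
scalars `d i` such that `(f c) i = d i * c (σ i)` for all `c ∈ C` and all `i`. -/
theorem stmt2 {F : Type*} [Field F] [Fintype F] [DecidableEq F] {n : ℕ}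
    (C C' : Submodule F (Fin n → F))
    (hC : ∀ i : Fin n, ∃ c ∈ C, c i ≠ 0)
    (hC' : ∀ i : Fin n, ∃ c ∈ C', c i ≠ 0)
    (f : C ≃ₗ[F] C')
    (hf : ∀ c : C, hammingNorm ((f c : Fin n → F)) = hammingNorm (c : Fin n → F)) :
    ∃ (σ : Equiv.Perm (Fin n)) (d : Fin n → Fˣ),
      ∀ (c : C) (i : Fin n), (f c : Fin n → F) i = (d i : F) * (c : Fin n → F) (σ i) := by
  let u (i : Fin n) : C →ₗ[F] F := proj i ∘ₗ C.subtype
  let u' (i : Fin n) : C →ₗ[F] F := proj i ∘ₗ C'.subtype ∘ₗ f.toLinearMap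
  have hu (i : Fin n) : u i ≠ 0 := by
    obtain ⟨c, hc, hci⟩ := hC i
    exact fun h0 => hci congr($h0 ⟨c, hc⟩)
  have hu' (i : Fin n) : u' i ≠ 0 := by
    obtain ⟨c, hc, hci⟩ := hC' i
    exact fun h0 => hci (by simpa [u'] using congr($h0 (f.symm ⟨c, hc⟩)))
  have hzeros (c : C) : Nat.card {i // u i c = 0} = Nat.card {i // u' i c = 0} := by
    have hsum := card_zeros_add_hammingNorm (c : Fin n → F)
    rw [← hf c, ← card_zeros_add_hammingNorm (f c : Fin n → F)] at hsum
    exact Nat.add_right_cancel hsum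
  obtain ⟨σ, d, hd⟩ := exists_perm_units_smul_of_card_zeros_eq hu hu' hzeros
  exact ⟨σ, d, fun c i => congr($(hd i) c)⟩
end

section
/- Let β ∈ G_{ℓ-1}(V) with β ∩ V_{m-ℓ} = 0 and δ ∈ G_{ℓ+1}(V) with dim(δ ∩ V_{m-ℓ}) = 1, and suppose π̃_β ∩ π̃^δ is nonempty (equivalently β ⊆ δ). Then every line in G_ℓ(V) contained in Ω joining a point of π̃_β to a point of π̃^δ passes through the point π̃_β ∩ π̃^δ and is entirely contained in π̃_β or in π̃^δ. -/
open Module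

/-- The subspace `V_{m-ℓ} ⊆ K^m` spanned by the first `m - ℓ` standard basis vectors. -/
def Vsub (K : Type*) [Field K] (m ℓ : ℕ) : Submodule K (Fin m → K) where
  carrier := {x | ∀ i : Fin m, m - ℓ ≤ (i : ℕ) → x i = 0}
  add_mem' := by intro a b ha hb i hi; simp [ha i hi, hb i hi]
  zero_mem' := by intro i _; rfl
  smul_mem' := by intro c a ha i hi; simp [ha i hi]

/-- Let `β ∈ G_{ℓ-1}(V)` with `β ∩ V_{m-ℓ} = 0` and `δ ∈ G_{ℓ+1}(V)`
with `dim(δ ∩ V_{m-ℓ}) = 1`, with `π̃_β ∩ π̃^δ ≠ ∅` (equivalently `β ⊆ δ`). Then every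
line `L = {γ : β' ⊆ γ ⊆ δ'}` of `G_ℓ(V)` contained in `Ω` joining a point of
`π̃_β = {γ : β ⊆ γ ⊆ β + V_{m-ℓ}}` to a (distinct) point of
`π̃^δ = {γ : δ ∩ V_{m-ℓ} ⊆ γ ⊆ δ}` passes through the point
`π̃_β ∩ π̃^δ = (δ ∩ V_{m-ℓ}) ⊕ β` and is entirely contained in `π̃_β` or in `π̃^δ`. -/
theorem stmt18 {K : Type*} [Field K] {m ℓ : ℕ} (h1 : 1 < ℓ) (h2 : ℓ < m)
    (β δ : Submodule K (Fin m → K))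
    (hβ : finrank K β = ℓ - 1) (hβV : β ⊓ Vsub K m ℓ = ⊥)
    (hδ : finrank K δ = ℓ + 1) (hδV : finrank K ↥(δ ⊓ Vsub K m ℓ) = 1)
    (hβδ : β ≤ δ)
    (β' δ' : Submodule K (Fin m → K))
    (hβ' : finrank K β' = ℓ - 1) (hδ' : finrank K δ' = ℓ + 1) (hβ'δ' : β' ≤ δ')
    (hLΩ : ∀ γ : Submodule K (Fin m → K),
      finrank K γ = ℓ → β' ≤ γ → γ ≤ δ' → γ ⊓ Vsub K m ℓ ≠ ⊥)
    (γ₁ γ₂ : Submodule K (Fin m → K)) (hne : γ₁ ≠ γ₂)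
    (hγ₁L : finrank K γ₁ = ℓ ∧ β' ≤ γ₁ ∧ γ₁ ≤ δ')
    (hγ₂L : finrank K γ₂ = ℓ ∧ β' ≤ γ₂ ∧ γ₂ ≤ δ')
    (hγ₁ : β ≤ γ₁ ∧ γ₁ ≤ β ⊔ Vsub K m ℓ)
    (hγ₂ : δ ⊓ Vsub K m ℓ ≤ γ₂ ∧ γ₂ ≤ δ) :
    (β' ≤ (δ ⊓ Vsub K m ℓ) ⊔ β ∧ (δ ⊓ Vsub K m ℓ) ⊔ β ≤ δ' ∧
      finrank K ↥((δ ⊓ Vsub K m ℓ) ⊔ β) = ℓ) ∧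
    ((∀ γ : Submodule K (Fin m → K), finrank K γ = ℓ → β' ≤ γ → γ ≤ δ' →
        (β ≤ γ ∧ γ ≤ β ⊔ Vsub K m ℓ)) ∨
     (∀ γ : Submodule K (Fin m → K), finrank K γ = ℓ → β' ≤ γ → γ ≤ δ' →
        (δ ⊓ Vsub K m ℓ ≤ γ ∧ γ ≤ δ))) := by

  obtain ⟨hd1, hb1, hc1⟩ := hγ₁L
  obtain ⟨hd2, hb2, hc2⟩ := hγ₂L
  obtain ⟨hβγ₁, hγ₁W⟩ := hγ₁
  obtain ⟨hDγ₂, hγ₂δ⟩ := hγ₂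
  set W := Vsub K m ℓ with hWdef
  -- dimension of the intersection point p = (δ ⊓ W) ⊔ β
  have hpdim : finrank K ↥((δ ⊓ W) ⊔ β) = ℓ := by
    have h := Submodule.finrank_sup_add_finrank_inf_eq (δ ⊓ W) β
    have hbot : (δ ⊓ W) ⊓ β = ⊥ := by
      rw [← le_bot_iff, ← hβV]
      exact le_inf inf_le_right (inf_le_left.trans inf_le_right)
    rw [hbot, finrank_bot] at h
    omega
  -- γ₁ ⊓ γ₂ = β'
  have hlt : γ₁ ⊓ γ₂ < γ₁ := by
    refine lt_of_le_of_ne inf_le_left ?_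
    intro h
    exact hne (Submodule.eq_of_le_of_finrank_le (h ▸ inf_le_right)
      (le_of_eq (hd2.trans hd1.symm)))
  have hint : γ₁ ⊓ γ₂ = β' := by
    refine (Submodule.eq_of_le_of_finrank_le (le_inf hb1 hb2) ?_).symm
    have := Submodule.finrank_lt_finrank_of_lt hlt
    omega
  -- γ₁ ⊔ γ₂ = δ'
  have hsupdim : finrank K ↥(γ₁ ⊔ γ₂) = ℓ + 1 := by
    have h := Submodule.finrank_sup_add_finrank_inf_eq γ₁ γ₂
    rw [hint] at h
    omega
  have hsup : γ₁ ⊔ γ₂ = δ' := by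
    refine Submodule.eq_of_le_of_finrank_le (sup_le hc1 hc2) ?_
    omega
  -- modular law : (β ⊔ W) ⊓ δ = (δ ⊓ W) ⊔ β
  have hmod : (β ⊔ W) ⊓ δ = (δ ⊓ W) ⊔ β := by
    rw [sup_inf_assoc_of_le W hβδ, inf_comm W δ, sup_comm β (δ ⊓ W)]
  have hβ'p : β' ≤ (δ ⊓ W) ⊔ β := by
    rw [← hint, ← hmod]
    exact inf_le_inf hγ₁W hγ₂δ
  have hpδ' : (δ ⊓ W) ⊔ β ≤ δ' := sup_le (hDγ₂.trans hc2) (hβγ₁.trans hc1)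
  refine ⟨⟨hβ'p, hpδ', hpdim⟩, ?_⟩
  by_cases hcase : β' ⊓ W = ⊥
  · -- line contained in π̃_β
    left
    have hdimBD : finrank K ↥(β' ⊔ (δ ⊓ W)) = ℓ := by
      have h := Submodule.finrank_sup_add_finrank_inf_eq β' (δ ⊓ W)
      have hbot : β' ⊓ (δ ⊓ W) = ⊥ := by
        rw [← le_bot_iff, ← hcase]
        exact le_inf inf_le_left (inf_le_right.trans inf_le_right)
      rw [hbot, finrank_bot] at h
      omega
    have e1 : β' ⊔ (δ ⊓ W) = γ₂ :=
      Submodule.eq_of_le_of_finrank_le (sup_le hb2 hDγ₂) (by omega)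
    have e2 : β' ⊔ (δ ⊓ W) = (δ ⊓ W) ⊔ β :=
      Submodule.eq_of_le_of_finrank_le (sup_le hβ'p le_sup_left) (by omega)
    have hγ₂p : γ₂ = (δ ⊓ W) ⊔ β := e1.symm.trans e2
    have hβγ₂ : β ≤ γ₂ := by rw [hγ₂p]; exact le_sup_right
    have hββ' : β = β' := by
      refine Submodule.eq_of_le_of_finrank_le ?_ (le_of_eq (hβ'.trans hβ.symm))
      rw [← hint]; exact le_inf hβγ₁ hβγ₂
    have hδ'W : δ' ≤ β ⊔ W := by
      rw [← hsup]
      refine sup_le hγ₁W ?_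
      rw [hγ₂p]
      exact sup_le (inf_le_right.trans le_sup_right) le_sup_left
    intro γ _ hbγ hγδ'
    exact ⟨hββ' ▸ hbγ, hγδ'.trans hδ'W⟩
  · -- line contained in π̃^δ
    right
    have hle : β' ⊓ W ≤ δ ⊓ W := inf_le_inf (hb2.trans hγ₂δ) le_rfl
    have hpos : finrank K ↥(β' ⊓ W) ≠ 0 := by
      intro h
      exact hcase (Submodule.finrank_eq_zero.mp h)
    have hDβ' : β' ⊓ W = δ ⊓ W :=
      Submodule.eq_of_le_of_finrank_le hle (by omega)
    have hDle : δ ⊓ W ≤ β' := hDβ' ▸ inf_le_left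
    have hγ₁p : (δ ⊓ W) ⊔ β = γ₁ :=
      Submodule.eq_of_le_of_finrank_le (sup_le (hDle.trans hb1) hβγ₁) (by omega)
    have hδ'δ : δ' = δ := by
      rw [← hsup]
      refine Submodule.eq_of_le_of_finrank_le
        (sup_le (hγ₁p ▸ sup_le inf_le_left hβδ) hγ₂δ) (by omega)
    intro γ _ hbγ hγδ'
    exact ⟨hDle.trans hbγ, hγδ'.trans (le_of_eq hδ'δ)⟩
end

section
/- Let δ ≠ δ' ∈ G_{ℓ+1}(V) with dim(δ ∩ V_{m-ℓ}) = dim(δ' ∩ V_{m-ℓ}) = 1 and suppose π̃^δ ∩ π̃^{δ'} ≠ ∅. Then there exists a line in G_ℓ(V) contained in Ω joining a point of π̃^δ to a point of π̃^{δ'} that is NOT completely contained in W_1, i.e., the line contains a point γ with dim(γ ∩ V_{m-ℓ}) ≥ 2. -/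
open Module

section Helpers

variable {K V : Type*} [Field K] [AddCommGroup V] [Module K V] [FiniteDimensional K V]

lemma finrank_sup_span_singleton (p : Submodule K V) {x : V} (hx : x ∉ p) :
    finrank K ↥(p ⊔ Submodule.span K {x}) = finrank K p + 1 := by
  have hx0 : x ≠ 0 := fun h => hx (h ▸ p.zero_mem)
  have hd : Disjoint p (Submodule.span K {x}) :=
    (Submodule.disjoint_span_singleton' hx0).mpr hx
  have := Submodule.finrank_sup_add_finrank_inf_eq p (Submodule.span K {x})
  rw [hd.eq_bot, finrank_bot, add_zero, finrank_span_singleton hx0] at this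
  exact this

lemma exists_between_finrank (n : ℕ) : ∀ (p q : Submodule K V), p ≤ q →
    finrank K p + n ≤ finrank K q →
    ∃ r : Submodule K V, p ≤ r ∧ r ≤ q ∧ finrank K r = finrank K p + n := by
  induction n with
  | zero => intro p q hpq _; exact ⟨p, le_rfl, hpq, rfl⟩
  | succ n ih =>
    intro p q hpq hle
    have hlt : p < q := lt_of_le_of_ne hpq (by rintro rfl; omega)
    obtain ⟨x, hxq, hxp⟩ := SetLike.exists_of_lt hlt
    have hx : finrank K ↥(p ⊔ Submodule.span K {x}) = finrank K p + 1 :=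
      finrank_sup_span_singleton p hxp
    obtain ⟨r, hr1, hr2, hr3⟩ := ih (p ⊔ Submodule.span K {x}) q
      (sup_le hpq ((Submodule.span_singleton_le_iff_mem x q).mpr hxq)) (by omega)
    exact ⟨r, le_trans le_sup_left hr1, hr2, by omega⟩

end Helpers

lemma Vsub_finrank_ge (K : Type*) [Field K] (m ℓ : ℕ) :
    m - ℓ ≤ finrank K (Vsub K m ℓ) := by
  classical
  set g : Fin (m - ℓ) → (Fin m → K) := fun j => Pi.single (Fin.castLE (Nat.sub_le m ℓ) j) 1
  have hmem : ∀ j, g j ∈ Vsub K m ℓ := by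
    intro j i hi
    apply Pi.single_eq_of_ne
    intro h
    rw [h] at hi
    simp only [Fin.coe_castLE] at hi
    omega
  set f : Fin (m - ℓ) → Vsub K m ℓ := fun j => ⟨g j, hmem j⟩
  have hli : LinearIndependent K g := by
    have := (Pi.basisFun K (Fin m)).linearIndependent
    have h2 := this.comp (Fin.castLE (Nat.sub_le m ℓ)) (Fin.castLE_injective _)
    convert h2 using 1
    funext j
    simp [g, Pi.basisFun_apply]
  have hlif : LinearIndependent K f :=
    hli.of_comp (Vsub K m ℓ).subtype
  simpa using hlif.fintype_card_le_finrank

/-- Let `δ ≠ δ'` be `(ℓ+1)`-dimensional subspaces with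
`dim(δ ∩ V_{m-ℓ}) = dim(δ' ∩ V_{m-ℓ}) = 1` and `π̃^δ ∩ π̃^{δ'} ≠ ∅`, where
`π̃^δ = {γ ∈ G_ℓ(V) : δ ∩ V_{m-ℓ} ⊆ γ ⊆ δ}`. Then there is a line
`L = {γ ∈ G_ℓ(V) : β'' ⊆ γ ⊆ δ''}` contained in the Schubert divisor `Ω`, joining a
point of `π̃^δ` to a (distinct) point of `π̃^{δ'}`, that is not completely contained in
`W₁`: it contains a point `γ₃` with `dim(γ₃ ∩ V_{m-ℓ}) ≥ 2`. -/
theorem stmt19 {K : Type*} [Field K] {m ℓ : ℕ} (h1 : 1 < ℓ) (h2 : ℓ < m)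
    (hm : 2 ≤ m - ℓ)
    (δ δ' : Submodule K (Fin m → K)) (hne : δ ≠ δ')
    (hδ : finrank K δ = ℓ + 1) (hδ' : finrank K δ' = ℓ + 1)
    (hδV : finrank K ↥(δ ⊓ Vsub K m ℓ) = 1)
    (hδ'V : finrank K ↥(δ' ⊓ Vsub K m ℓ) = 1)
    (hmeet : ∃ γ : Submodule K (Fin m → K), finrank K γ = ℓ ∧
      (δ ⊓ Vsub K m ℓ ≤ γ ∧ γ ≤ δ) ∧ (δ' ⊓ Vsub K m ℓ ≤ γ ∧ γ ≤ δ')) :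
    ∃ β'' δ'' : Submodule K (Fin m → K),
      finrank K β'' = ℓ - 1 ∧ finrank K δ'' = ℓ + 1 ∧ β'' ≤ δ'' ∧
      (∀ γ : Submodule K (Fin m → K), finrank K γ = ℓ → β'' ≤ γ → γ ≤ δ'' →
        γ ⊓ Vsub K m ℓ ≠ ⊥) ∧
      (∃ γ₁ γ₂ : Submodule K (Fin m → K), γ₁ ≠ γ₂ ∧
        (finrank K γ₁ = ℓ ∧ β'' ≤ γ₁ ∧ γ₁ ≤ δ'') ∧
        (finrank K γ₂ = ℓ ∧ β'' ≤ γ₂ ∧ γ₂ ≤ δ'') ∧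
        (δ ⊓ Vsub K m ℓ ≤ γ₁ ∧ γ₁ ≤ δ) ∧
        (δ' ⊓ Vsub K m ℓ ≤ γ₂ ∧ γ₂ ≤ δ')) ∧
      (∃ γ₃ : Submodule K (Fin m → K),
        finrank K γ₃ = ℓ ∧ β'' ≤ γ₃ ∧ γ₃ ≤ δ'' ∧
        2 ≤ finrank K ↥(γ₃ ⊓ Vsub K m ℓ)) := by
  classical
  obtain ⟨γ, hγr, ⟨hAγ, hγδ⟩, ⟨hA'γ, hγδ'⟩⟩ := hmeet
  set V' := Vsub K m ℓ with hV'
  set A := δ ⊓ V' with hA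
  set A' := δ' ⊓ V' with hA'
  -- δ ⊓ δ' = γ
  have hinf_le : finrank K ↥(δ ⊓ δ') ≤ ℓ := by
    by_contra h
    push_neg at h
    have h3 : finrank K ↥(δ ⊓ δ') ≤ finrank K δ :=
      Submodule.finrank_mono inf_le_left
    have h4 : δ ⊓ δ' = δ := by
      symm
      exact Submodule.eq_of_le_of_finrank_le inf_le_left (by omega) |>.symm
    have h5 : δ ≤ δ' := h4 ▸ inf_le_right
    exact hne (Submodule.eq_of_le_of_finrank_le h5 (by omega))
  have hγeq : γ = δ ⊓ δ' :=
    Submodule.eq_of_le_of_finrank_le (le_inf hγδ hγδ') (by omega)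
  -- a helper for the Ω condition
  have hAne : A ≠ ⊥ := by
    intro h
    rw [h, finrank_bot] at hδV
    omega
  have hA'ne : A' ≠ ⊥ := by
    intro h
    rw [h, finrank_bot] at hδ'V
    omega
  have omega_cond : ∀ (B : Submodule K (Fin m → K)), B ≠ ⊥ → B ≤ V' →
      ∀ γ' : Submodule K (Fin m → K), B ≤ γ' → γ' ⊓ V' ≠ ⊥ := by
    intro B hB hBV γ' hBγ' hbot
    exact hB (le_bot_iff.mp (hbot ▸ le_inf hBγ' hBV))
  by_cases hc : 2 ≤ finrank K ↥(γ ⊓ V')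
  · -- Case 1: γ itself meets V' in dimension ≥ 2
    obtain ⟨β'', hb1, hb2, hb3⟩ := exists_between_finrank (ℓ - 2) A' γ hA'γ
      (by omega)
    have hb3' : finrank K β'' = ℓ - 1 := by omega
    -- x ∈ δ' \ γ
    have hγltδ' : γ < δ' := lt_of_le_of_ne hγδ' (by intro h; rw [h] at hγr; omega)
    obtain ⟨x, hxδ', hxγ⟩ := SetLike.exists_of_lt hγltδ'
    set δ'' := γ ⊔ Submodule.span K {x} with hδ''
    have hδ''r : finrank K δ'' = ℓ + 1 := by
      rw [hδ'', finrank_sup_span_singleton γ hxγ, hγr]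
    have hxβ'' : x ∉ β'' := fun h => hxγ (hb2 h)
    set γ₂ := β'' ⊔ Submodule.span K {x} with hγ₂
    have hγ₂r : finrank K γ₂ = ℓ := by
      rw [hγ₂, finrank_sup_span_singleton β'' hxβ'', hb3']; omega
    have hγ₂δ'' : γ₂ ≤ δ'' :=
      sup_le (le_trans hb2 le_sup_left) le_sup_right
    refine ⟨β'', δ'', hb3', hδ''r, le_trans hb2 le_sup_left, ?_, ?_, ?_⟩
    · intro γ' _ hβγ' _
      exact omega_cond A' hA'ne inf_le_right γ' (le_trans hb1 hβγ')
    · refine ⟨γ, γ₂, ?_, ⟨hγr, hb2, le_sup_left⟩, ⟨hγ₂r, le_sup_left, hγ₂δ''⟩,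
        ⟨hAγ, hγδ⟩, ⟨le_trans hb1 le_sup_left, sup_le (le_trans hb2 hγδ')
          ((Submodule.span_singleton_le_iff_mem x δ').mpr hxδ')⟩⟩
      intro h
      apply hxγ
      rw [h, hγ₂]
      exact Submodule.mem_sup_right (Submodule.mem_span_singleton_self x)
    · exact ⟨γ, hγr, hb2, le_sup_left, hc⟩
  · -- Case 2: γ ⊓ V' = A = A'
    push_neg at hc
    have hAγV : A ≤ γ ⊓ V' := le_inf hAγ inf_le_right
    have hAeq : A = γ ⊓ V' :=
      Submodule.eq_of_le_of_finrank_le hAγV (by omega)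
    have hA'A : A' = A := by
      apply Submodule.eq_of_le_of_finrank_le
      · rw [hAeq]; exact le_inf hA'γ inf_le_right
      · omega
    -- pick v ∈ (δ ⊔ δ') ⊓ V' outside A
    set P := δ ⊔ δ' with hP
    have hPr : finrank K P = ℓ + 2 := by
      have h9 := Submodule.finrank_sup_add_finrank_inf_eq δ δ'
      rw [← hγeq, hγr, hδ, hδ'] at h9
      rw [hP]
      omega
    have hPV2 : 2 ≤ finrank K ↥(P ⊓ V') := by
      have h6 := Submodule.finrank_sup_add_finrank_inf_eq P V'
      have h7 : finrank K ↥(P ⊔ V') ≤ m := by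
        have := Submodule.finrank_le (P ⊔ V')
        simpa [Module.finrank_pi] using this
      have h8 := Vsub_finrank_ge K m ℓ
      rw [← hV'] at h8
      rw [hPr] at h6
      omega
    have hAPV : A ≤ P ⊓ V' := le_inf (le_trans inf_le_left le_sup_left) inf_le_right
    have hAlt : A < P ⊓ V' := lt_of_le_of_ne hAPV (by intro h; rw [← h] at hPV2; omega)
    obtain ⟨v, hvPV, hvA⟩ := SetLike.exists_of_lt hAlt
    have hvV : v ∈ V' := hvPV.2
    have hvγ : v ∉ γ := by
      intro h
      have h9 : v ∈ γ ⊓ V' := Submodule.mem_inf.mpr ⟨h, hvV⟩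
      rw [← hAeq] at h9
      exact hvA h9
    obtain ⟨x, hxδ, x', hx'δ', hxx'⟩ := Submodule.mem_sup.mp hvPV.1
    have hxγ : x ∉ γ := by
      intro h
      apply hvA
      have hvδ' : v ∈ δ' := by
        rw [← hxx']; exact Submodule.add_mem δ' (hγδ' h) hx'δ'
      rw [← hA'A]; exact Submodule.mem_inf.mpr ⟨hvδ', hvV⟩
    have hx'γ : x' ∉ γ := by
      intro h
      apply hvA
      have hvδ : v ∈ δ := by
        rw [← hxx']; exact Submodule.add_mem δ hxδ (hγδ h)
      exact Submodule.mem_inf.mpr ⟨hvδ, hvV⟩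
    -- β'' : hyperplane of γ containing A
    obtain ⟨β'', hb1, hb2, hb3⟩ := exists_between_finrank (ℓ - 2) A γ hAγ (by omega)
    have hb3' : finrank K β'' = ℓ - 1 := by omega
    have hxβ'' : x ∉ β'' := fun h => hxγ (hb2 h)
    have hx'β'' : x' ∉ β'' := fun h => hx'γ (hb2 h)
    set γ₁ := β'' ⊔ Submodule.span K {x} with hγ₁
    -- key: v ∉ γ₁
    have hvγ₁ : v ∉ γ₁ := by
      intro hv
      obtain ⟨b, hb, y, hy, hby⟩ := Submodule.mem_sup.mp hv
      obtain ⟨c, rfl⟩ := Submodule.mem_span_singleton.mp hy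
      -- v = b + c • x, v = x + x'
      have h9 : b + c • x = x + x' := by rw [hby, ← hxx']
      have hsm : (c - 1) • x = x' - b := by
        linear_combination (norm := module) h9
      by_cases hc1 : c = 1
      · apply hx'γ
        have h10 : x' = b := by
          rw [hc1, sub_self, zero_smul] at hsm
          exact sub_eq_zero.mp hsm.symm
        rw [h10]; exact hb2 hb
      · apply hxγ
        have hmem : (c - 1) • x ∈ δ' := by
          rw [hsm]
          exact Submodule.sub_mem δ' hx'δ' (hγδ' (hb2 hb))
        have hxδ'2 : x ∈ δ' := by
          have := Submodule.smul_mem δ' (c - 1)⁻¹ hmem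
          rwa [inv_smul_smul₀ (sub_ne_zero.mpr hc1)] at this
        rw [hγeq]
        exact Submodule.mem_inf.mpr ⟨hxδ, hxδ'2⟩
    set δ'' := γ₁ ⊔ Submodule.span K {v} with hδ''
    have hγ₁r : finrank K γ₁ = ℓ := by
      rw [hγ₁, finrank_sup_span_singleton β'' hxβ'', hb3']; omega
    have hδ''r : finrank K δ'' = ℓ + 1 := by
      rw [hδ'', finrank_sup_span_singleton γ₁ hvγ₁, hγ₁r]
    have hβδ'' : β'' ≤ δ'' := le_trans le_sup_left le_sup_left
    have hxδ'' : x ∈ δ'' :=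
      Submodule.mem_sup_left (Submodule.mem_sup_right (Submodule.mem_span_singleton_self x) : x ∈ γ₁)
    have hvδ'' : v ∈ δ'' := Submodule.mem_sup_right (Submodule.mem_span_singleton_self v)
    have hx'δ'' : x' ∈ δ'' := by
      have : x' = v - x := by rw [← hxx']; abel
      rw [this]; exact Submodule.sub_mem δ'' hvδ'' hxδ''
    set γ₂ := β'' ⊔ Submodule.span K {x'} with hγ₂
    have hγ₂r : finrank K γ₂ = ℓ := by
      rw [hγ₂, finrank_sup_span_singleton β'' hx'β'', hb3']; omega
    set γ₃ := β'' ⊔ Submodule.span K {v} with hγ₃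
    have hvβ'' : v ∉ β'' := fun h => hvγ (hb2 h)
    have hγ₃r : finrank K γ₃ = ℓ := by
      rw [hγ₃, finrank_sup_span_singleton β'' hvβ'', hb3']; omega
    refine ⟨β'', δ'', hb3', hδ''r, hβδ'', ?_, ?_, ?_⟩
    · intro γ' _ hβγ' _
      exact omega_cond A hAne inf_le_right γ' (le_trans hb1 hβγ')
    · refine ⟨γ₁, γ₂, ?_, ⟨hγ₁r, le_sup_left, le_sup_left⟩,
        ⟨hγ₂r, le_sup_left, sup_le hβδ''
          ((Submodule.span_singleton_le_iff_mem x' δ'').mpr hx'δ'')⟩,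
        ⟨le_trans hb1 le_sup_left, sup_le (le_trans hb2 hγδ)
          ((Submodule.span_singleton_le_iff_mem x δ).mpr hxδ)⟩,
        ⟨hA'A ▸ le_trans hb1 le_sup_left, sup_le (le_trans hb2 hγδ')
          ((Submodule.span_singleton_le_iff_mem x' δ').mpr hx'δ')⟩⟩
      intro h
      apply hvγ₁
      have hx'γ₁ : x' ∈ γ₁ := by
        rw [h, hγ₂]
        exact Submodule.mem_sup_right (Submodule.mem_span_singleton_self x')
      have hxγ₁ : x ∈ γ₁ := Submodule.mem_sup_right (Submodule.mem_span_singleton_self x)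
      rw [← hxx']
      exact Submodule.add_mem γ₁ hxγ₁ hx'γ₁
    · refine ⟨γ₃, hγ₃r, le_sup_left,
        sup_le hβδ'' le_sup_right, ?_⟩
      have hsub : A ⊔ Submodule.span K {v} ≤ γ₃ ⊓ V' := by
        apply le_inf
        · exact sup_le (le_trans hb1 le_sup_left) le_sup_right
        · exact sup_le inf_le_right
            ((Submodule.span_singleton_le_iff_mem v V').mpr hvV)
      have hr2 : finrank K ↥(A ⊔ Submodule.span K {v}) = 2 := by
        rw [finrank_sup_span_singleton A hvA, hδV]
      calc 2 = finrank K ↥(A ⊔ Submodule.span K {v}) := hr2.symm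
        _ ≤ finrank K ↥(γ₃ ⊓ V') := Submodule.finrank_mono hsub
end
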